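/- Let C ∈ ℝ^{n×m}, a ∈ ℝ^n, b ∈ ℝ^m, λ > 0, and let T ∈ ℝ^{n×m} be a nonnegative matrix. Then T minimizes the ℓ2-penalized unbalanced optimal transport objective F_λ over all nonnegative matrices if and only if for every pair (i, j): C_{i,j} + λ·([T𝟙_m]_i − a_i) + λ·([Tᵀ𝟙_n]_j − b_j) ≥ 0, with equality whenever T_{i,j} > 0. -/

import Mathlib

open Finset

noncomputable def FobjL2 {n m : ℕ} (C : Matrix (Fin n) (Fin m) ℝ)
    (a : Fin n → ℝ) (b : Fin m → ℝ) (lam : ℝ)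
    (T : Matrix (Fin n) (Fin m) ℝ) : ℝ :=
  (∑ i, ∑ j, C i j * T i j)
    + lam / 2 * ∑ i, ((∑ j, T i j) - a i) ^ 2
    + lam / 2 * ∑ j, ((∑ i, T i j) - b j) ^ 2

lemma key_expand {n m : ℕ} (C : Matrix (Fin n) (Fin m) ℝ)
    (a : Fin n → ℝ) (b : Fin m → ℝ) (lam : ℝ)
    (T T' : Matrix (Fin n) (Fin m) ℝ) :
    FobjL2 C a b lam T' = FobjL2 C a b lam T
      + (∑ i, ∑ j, (C i j + lam * ((∑ l, T i l) - a i) + lam * ((∑ k, T k j) - b j))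
          * (T' i j - T i j))
      + lam / 2 * ∑ i, ((∑ j, T' i j) - (∑ j, T i j)) ^ 2
      + lam / 2 * ∑ j, ((∑ i, T' i j) - (∑ i, T i j)) ^ 2 := by
  have hsplit : ∑ i, ∑ j,
      (C i j + lam * ((∑ l, T i l) - a i) + lam * ((∑ k, T k j) - b j)) * (T' i j - T i j)
    = ((∑ i, ∑ j, C i j * T' i j) - ∑ i, ∑ j, C i j * T i j)
      + (∑ i, lam * ((∑ l, T i l) - a i) * ((∑ j, T' i j) - (∑ j, T i j)))
      + (∑ j, lam * ((∑ k, T k j) - b j) * ((∑ i, T' i j) - (∑ i, T i j))) := by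
    simp only [add_mul, Finset.sum_add_distrib]
    congr 1
    congr 1
    · rw [← Finset.sum_sub_distrib]
      refine Finset.sum_congr rfl fun i _ => ?_
      rw [← Finset.sum_sub_distrib]
      exact Finset.sum_congr rfl fun j _ => by ring
    · refine Finset.sum_congr rfl fun i _ => ?_
      rw [← Finset.mul_sum, Finset.sum_sub_distrib]
    · rw [Finset.sum_comm]
      refine Finset.sum_congr rfl fun j _ => ?_
      rw [← Finset.mul_sum, Finset.sum_sub_distrib]
  rw [hsplit]
  unfold FobjL2
  have hr : lam / 2 * ∑ i, ((∑ j, T' i j) - a i) ^ 2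
      = lam / 2 * (∑ i, ((∑ j, T i j) - a i) ^ 2)
        + (∑ i, lam * ((∑ l, T i l) - a i) * ((∑ j, T' i j) - (∑ j, T i j)))
        + lam / 2 * ∑ i, ((∑ j, T' i j) - (∑ j, T i j)) ^ 2 := by
    simp only [Finset.mul_sum, ← Finset.sum_add_distrib]
    exact Finset.sum_congr rfl fun i _ => by ring
  have hc : lam / 2 * ∑ j, ((∑ i, T' i j) - b j) ^ 2
      = lam / 2 * (∑ j, ((∑ i, T i j) - b j) ^ 2)
        + (∑ j, lam * ((∑ k, T k j) - b j) * ((∑ i, T' i j) - (∑ i, T i j)))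
        + lam / 2 * ∑ j, ((∑ i, T' i j) - (∑ i, T i j)) ^ 2 := by
    simp only [Finset.mul_sum, ← Finset.sum_add_distrib]
    exact Finset.sum_congr rfl fun j _ => by ring
  rw [hr, hc]; ring

/-- KKT characterization of optimality for ℓ2-penalized UOT: a nonnegative `T`
minimizes `F_λ` over nonnegative matrices iff for all `(i,j)`,
`C_{i,j} + λ([T𝟙_m]_i − a_i) + λ([Tᵀ𝟙_n]_j − b_j) ≥ 0`,
with equality whenever `T_{i,j} > 0`. -/
theorem l2_uot_kkt {n m : ℕ} (C : Matrix (Fin n) (Fin m) ℝ)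
    (a : Fin n → ℝ) (b : Fin m → ℝ) (lam : ℝ) (hlam : 0 < lam)
    (T : Matrix (Fin n) (Fin m) ℝ) (hT : ∀ i j, 0 ≤ T i j) :
    (∀ T' : Matrix (Fin n) (Fin m) ℝ, (∀ i j, 0 ≤ T' i j) →
        FobjL2 C a b lam T ≤ FobjL2 C a b lam T')
      ↔ (∀ i j,
          0 ≤ C i j + lam * ((∑ l, T i l) - a i) + lam * ((∑ k, T k j) - b j)
          ∧ (0 < T i j →
              C i j + lam * ((∑ l, T i l) - a i) + lam * ((∑ k, T k j) - b j) = 0)) := by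
  set g : Fin n → Fin m → ℝ := fun i j =>
    C i j + lam * ((∑ l, T i l) - a i) + lam * ((∑ k, T k j) - b j) with hg
  constructor
  · intro H i j
    clear_value g
    -- perturbation
    set P : ℝ → Matrix (Fin n) (Fin m) ℝ := fun t p q =>
      T p q + (if p = i then (if q = j then t else 0) else 0) with hP
    have hF : ∀ t : ℝ, FobjL2 C a b lam (P t)
        = FobjL2 C a b lam T + (g i j * t + lam * t ^ 2) := by
      intro t
      rw [key_expand C a b lam T (P t)]
      have h1 : ∑ p, ∑ q, (C p q + lam * ((∑ l, T p l) - a p) + lam * ((∑ k, T k q) - b q))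
            * (P t p q - T p q) = g i j * t := by
        have e1 : ∑ p, ∑ q, (C p q + lam * ((∑ l, T p l) - a p) + lam * ((∑ k, T k q) - b q))
              * (P t p q - T p q)
            = ∑ p, ∑ q, (if p = i then if q = j then
                (C p q + lam * ((∑ l, T p l) - a p) + lam * ((∑ k, T k q) - b q)) * t
                else 0 else 0) := by
          refine Finset.sum_congr rfl fun p _ => Finset.sum_congr rfl fun q _ => ?_
          simp only [hP]
          split_ifs <;> ring
        rw [e1]
        have e2 : ∀ p : Fin n, ∑ q, (if p = i then if q = j then
                (C p q + lam * ((∑ l, T p l) - a p) + lam * ((∑ k, T k q) - b q)) * t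
                else 0 else 0)
            = (if p = i then
                (C p j + lam * ((∑ l, T p l) - a p) + lam * ((∑ k, T k j) - b j)) * t
                else 0) := by
          intro p
          by_cases hp : p = i
          · simp [hp, Finset.sum_ite_eq']
          · simp [hp]
        simp only [e2]
        simp [Finset.sum_ite_eq', hg]
      have h2 : ∀ p, (∑ q, P t p q) - (∑ q, T p q) = if p = i then t else 0 := by
        intro p
        simp [hP, Finset.sum_add_distrib, Finset.sum_ite_eq']
      have h3 : ∀ q, (∑ p, P t p q) - (∑ p, T p q) = if q = j then t else 0 := by
        intro q
        simp [hP, Finset.sum_add_distrib, Finset.sum_ite_eq', ite_and]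
      simp only [h1, h2, h3]
      have h4 : ∑ p, (if p = i then t else 0) ^ 2 = t ^ 2 := by
        simp [apply_ite (· ^ 2), Finset.sum_ite_eq']
      have h5 : ∑ q, (if q = j then t else 0) ^ 2 = t ^ 2 := by
        simp [apply_ite (· ^ 2), Finset.sum_ite_eq']
      rw [h4, h5]; ring
    have hkey : ∀ t : ℝ, -T i j ≤ t → 0 ≤ g i j * t + lam * t ^ 2 := by
      intro t ht
      have hnn : ∀ p q, 0 ≤ P t p q := by
        intro p q
        by_cases hp : p = i
        · by_cases hq : q = j
          · subst hp; subst hq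
            have hPeq : P t p q = T p q + t := by simp [hP]
            rw [hPeq]; linarith [hT p q]
          · simp [hP, hp, hq, hT]
        · simp [hP, hp, hT]
      have := H (P t) hnn
      rw [hF t] at this
      linarith
    have hge : 0 ≤ g i j := by
      by_contra hneg
      push_neg at hneg
      have htpos : 0 < -g i j / (2 * lam) := div_pos (by linarith) (by linarith)
      have := hkey (-g i j / (2 * lam)) (by linarith [hT i j])
      have hexp : g i j * (-g i j / (2 * lam)) + lam * (-g i j / (2 * lam)) ^ 2
          = -((g i j) ^ 2 / (4 * lam)) := by
        field_simp; ring
      rw [hexp] at this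
      have h6 : 0 < g i j ^ 2 / (4 * lam) :=
        div_pos (pow_two_pos_of_ne_zero hneg.ne) (by linarith)
      linarith
    have heq : 0 < T i j → g i j = 0 := by
      intro hTpos
      by_contra hne
      have hgpos : 0 < g i j := lt_of_le_of_ne hge (Ne.symm hne)
      set t : ℝ := -min (T i j) (g i j / (2 * lam)) with htdef
      clear_value t
      have htneg : t < 0 := by
        have : 0 < min (T i j) (g i j / (2 * lam)) :=
          lt_min hTpos (div_pos hgpos (by linarith))
        simpa [htdef] using neg_neg_of_pos this
      have htge : -T i j ≤ t := by
        have : min (T i j) (g i j / (2 * lam)) ≤ T i j := min_le_left _ _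
        simp only [htdef]; linarith
      have hgl : 0 < g i j + lam * t := by
        have h1 : min (T i j) (g i j / (2 * lam)) ≤ g i j / (2 * lam) := min_le_right _ _
        have h2 : lam * (-(g i j / (2 * lam))) ≤ lam * t := by
          rw [htdef]
          exact mul_le_mul_of_nonneg_left (neg_le_neg h1) hlam.le
        have h3 : lam * (-(g i j / (2 * lam))) = -(g i j) / 2 := by
          field_simp
        linarith
      have := hkey t htge
      nlinarith [mul_pos (neg_pos.mpr htneg) hgl]
    simp only [hg] at hge heq
    exact ⟨hge, heq⟩
  · intro H T' hT'
    rw [key_expand C a b lam T T']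
    have hS : 0 ≤ ∑ i, ∑ j, g i j * (T' i j - T i j) := by
      refine Finset.sum_nonneg fun i _ => Finset.sum_nonneg fun j _ => ?_
      have hgT : g i j * T i j = 0 := by
        rcases (hT i j).lt_or_eq with h | h
        · have h0 : g i j = 0 := (H i j).2 h
          rw [h0, zero_mul]
        · rw [← h, mul_zero]
      have : g i j * (T' i j - T i j) = g i j * T' i j := by
        rw [mul_sub, hgT, sub_zero]
      rw [this]
      exact mul_nonneg (H i j).1 (hT' i j)
    have hsq1 : 0 ≤ ∑ i, ((∑ j, T' i j) - (∑ j, T i j)) ^ 2 :=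
      Finset.sum_nonneg fun i _ => sq_nonneg _
    have hsq2 : 0 ≤ ∑ j, ((∑ i, T' i j) - (∑ i, T i j)) ^ 2 :=
      Finset.sum_nonneg fun j _ => sq_nonneg _
    nlinarith
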